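/- arXiv:2505.11087 — 3 statements merged into one kernel-verified Lean document; each statement's English description precedes it below -/
import Mathlib

section
/- Let N ≥ 1, let v : {1,…,N} → ℤ, and let B be an invertible N × N matrix over K = ℂ((t)) such that val(B_{ij}) ≥ v_j − v_i and val((B^{-1})_{ij}) ≥ v_j − v_i for all i, j. Define complex N × N matrices B̄ and C̄ by B̄_{ij} = coeff_{v_j − v_i}(B_{ij}) and C̄_{ij} = coeff_{v_j − v_i}((B^{-1})_{ij}). Then B̄ · C̄ equals the N × N identity matrix over ℂ; in particular the leading-order matrix B̄ lies in GL(N, ℂ). -/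
/-!
If `val (B i j) ≥ v j - v i` and `val (C j k) ≥ v k - v j`, the only term of the Cauchy product
contributing to the coefficient of `t ^ (v k - v i)` in `B i j * C j k` is the product of the two
leading-order coefficients. Hence taking leading-order matrices is multiplicative on such
matrices, `B * C = 1` gives `B̄ * C̄ = 1`, and a one-sided inverse of a square matrix over a field
is two-sided.
-/

open scoped HahnSeries

namespace HahnSeries

theorem le_of_le_orderTop_of_coeff_ne_zero {Γ R : Type*} [LinearOrder Γ] [Zero R] {x : R⟦Γ⟧}
    {a i : Γ} (ha : (a : WithTop Γ) ≤ x.orderTop) (hi : x.coeff i ≠ 0) : a ≤ i :=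
  WithTop.coe_le_coe.mp (ha.trans (orderTop_le_of_coeff_ne_zero hi))

theorem coeff_mul_of_le_orderTop {Γ R : Type*} [AddCommMonoid Γ] [LinearOrder Γ]
    [IsOrderedCancelAddMonoid Γ] [NonUnitalNonAssocSemiring R] {x y : R⟦Γ⟧} {a b : Γ}
    (hx : (a : WithTop Γ) ≤ x.orderTop) (hy : (b : WithTop Γ) ≤ y.orderTop) :
    (x * y).coeff (a + b) = x.coeff a * y.coeff b := by
  rw [coeff_mul, Finset.sum_eq_single (a, b)]
  · rintro ⟨i, j⟩ hij hne
    obtain ⟨hi, hj, hsum⟩ := Finset.mem_antidiagonal.mp hij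
    obtain ⟨rfl, rfl⟩ := (add_eq_add_iff_eq_and_eq (le_of_le_orderTop_of_coeff_ne_zero hx hi)
      (le_of_le_orderTop_of_coeff_ne_zero hy hj)).mp hsum.symm
    exact absurd rfl hne
  · intro hab
    simp only [Finset.mem_antidiagonal, mem_support, ne_eq, and_true, not_and_or,
      not_not] at hab
    rcases hab with ha | hb
    · rw [ha, zero_mul]
    · rw [hb, mul_zero]

end HahnSeries

namespace Matrix

variable {n Γ R : Type*} [AddCommGroup Γ] [LinearOrder Γ]

def leadingOrder [Zero R] (v : n → Γ) (B : Matrix n n R⟦Γ⟧) : Matrix n n R :=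
  fun i j => (B i j).coeff (v j - v i)

theorem leadingOrder_mul [Fintype n] [IsOrderedAddMonoid Γ] [NonUnitalNonAssocSemiring R]
    {v : n → Γ} {B C : Matrix n n R⟦Γ⟧}
    (hB : ∀ i j, ((v j - v i : Γ) : WithTop Γ) ≤ (B i j).orderTop)
    (hC : ∀ i j, ((v j - v i : Γ) : WithTop Γ) ≤ (C i j).orderTop) :
    leadingOrder v (B * C) = leadingOrder v B * leadingOrder v C := by
  ext i k
  simp only [leadingOrder, mul_apply, HahnSeries.coeff_sum]
  refine Finset.sum_congr rfl fun j _ => ?_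
  rw [← HahnSeries.coeff_mul_of_le_orderTop (hB i j) (hC j k), sub_add_sub_cancel']

theorem leadingOrder_one [DecidableEq n] [Zero R] [One R] (v : n → Γ) :
    leadingOrder v (1 : Matrix n n R⟦Γ⟧) = 1 := by
  ext i j
  by_cases h : i = j
  · subst h
    simp [leadingOrder]
  · simp [leadingOrder, one_apply_ne h]

end Matrix

theorem leading_order_matrix_invertible_general
    {N : ℕ} (v : Fin N → ℤ)
    (B C : Matrix (Fin N) (Fin N) (LaurentSeries ℂ))
    (hBC : B * C = 1)
    (hB : ∀ i j, ((v j - v i : ℤ) : WithTop ℤ) ≤ (B i j).orderTop)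
    (hC : ∀ i j, ((v j - v i : ℤ) : WithTop ℤ) ≤ (C i j).orderTop)
    (Bbar Cbar : Matrix (Fin N) (Fin N) ℂ)
    (hBbar : ∀ i j, Bbar i j = (B i j).coeff (v j - v i))
    (hCbar : ∀ i j, Cbar i j = (C i j).coeff (v j - v i)) :
    Bbar * Cbar = 1 ∧ IsUnit Bbar := by
  have hBC_bar : Bbar * Cbar = 1 := by
    rw [show Bbar = Matrix.leadingOrder v B from Matrix.ext hBbar,
      show Cbar = Matrix.leadingOrder v C from Matrix.ext hCbar,
      ← Matrix.leadingOrder_mul hB hC, hBC, Matrix.leadingOrder_one]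
  exact ⟨hBC_bar, IsUnit.of_mul_eq_one Cbar hBC_bar⟩

/-- Let `B` be an invertible `N × N` matrix over `K = ℂ((t))` (with inverse `C`), whose
entries satisfy `val (B i j) ≥ v j - v i` and `val (C i j) ≥ v j - v i` for a weight
vector `v : Fin N → ℤ` (here `val` is the `t`-adic valuation, `val 0 = ∞`).  Then the
complex leading-order matrices `B̄ i j = coeff_{v j - v i} (B i j)` and
`C̄ i j = coeff_{v j - v i} (C i j)` satisfy `B̄ * C̄ = 1`; in particular `B̄ ∈ GL(N, ℂ)`. -/
theorem leading_order_matrix_invertible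
    {N : ℕ} (hN : 1 ≤ N) (v : Fin N → ℤ)
    (B C : Matrix (Fin N) (Fin N) (LaurentSeries ℂ))
    (hBC : B * C = 1) (hCB : C * B = 1)
    (hB : ∀ i j, ((v j - v i : ℤ) : WithTop ℤ) ≤ (B i j).orderTop)
    (hC : ∀ i j, ((v j - v i : ℤ) : WithTop ℤ) ≤ (C i j).orderTop)
    (Bbar Cbar : Matrix (Fin N) (Fin N) ℂ)
    (hBbar : ∀ i j, Bbar i j = (B i j).coeff (v j - v i))
    (hCbar : ∀ i j, Cbar i j = (C i j).coeff (v j - v i)) :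
    Bbar * Cbar = 1 ∧ IsUnit Bbar :=
  leading_order_matrix_invertible_general v B C hBC hB hC Bbar Cbar hBbar hCbar
end

section
/- The Kontorovich functional ℱ attains its minimum on 𝒫_c: there exists φ₀ ∈ 𝒫_c such that ℱ(φ₀) ≤ ℱ(φ) for all φ ∈ 𝒫_c. -/
open MeasureTheory

/-- The `c`-transform of a function `φ : X → ℝ`: `φ^c (p) = sup_{x ∈ X} (c x p - φ x)`. -/
noncomputable def ctransX {X P : Type*} (c : X → P → ℝ) (φ : X → ℝ) : P → ℝ :=
  fun p => ⨆ x, (c x p - φ x)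

/-- The `c`-transform of a function `ψ : P → ℝ`: `ψ^c (x) = sup_{p ∈ P} (c x p - ψ p)`. -/
noncomputable def ctransP {X P : Type*} (c : X → P → ℝ) (ψ : P → ℝ) : X → ℝ :=
  fun x => ⨆ p, (c x p - ψ p)

/-- The class `𝒫_c` of `c`-convex potentials on `X`: the image of the `c`-transform of
bounded functions on `P`. -/
noncomputable def Pc {X P : Type*} (c : X → P → ℝ) : Set (X → ℝ) :=
  {φ | ∃ ψ : P → ℝ, (∃ M, ∀ p, |ψ p| ≤ M) ∧ φ = ctransP c ψ}

/-- The Kontorovich functional `ℱ(φ) = ∫_X φ dμ + ∫_P φ^c dν`. -/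
noncomputable def kantF {X P : Type*} [MeasurableSpace X] [MeasurableSpace P]
    (c : X → P → ℝ) (μ : Measure X) (ν : Measure P) (φ : X → ℝ) : ℝ :=
  (∫ x, φ x ∂μ) + ∫ p, ctransX c φ p ∂ν

/-!
Adding a constant to a potential does not change `kantF`, so it suffices to minimize over
potentials vanishing at a base point `x₀`. These inherit the modulus of continuity of `c` and are
bounded by `2 sup |c|`. They also form a closed subset of `X →ᵇ ℝ`: `φ ∈ 𝒫_c` iff `φ^{cc} = φ`,
and `φ ↦ φ^{cc}` is 1-Lipschitz for the sup norm. By Arzelà–Ascoli this set is compact, and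
`kantF` is 2-Lipschitz for the sup norm, so it attains its minimum there.
-/

open Set Function BoundedContinuousFunction

lemma abs_ciSup_sub_ciSup_le {ι : Type*} [Nonempty ι] {f g : ι → ℝ} {ε : ℝ}
    (hf : BddAbove (range f)) (hg : BddAbove (range g)) (h : ∀ i, |f i - g i| ≤ ε) :
    |(⨆ i, f i) - ⨆ i, g i| ≤ ε := by
  rw [abs_sub_le_iff, sub_le_iff_le_add, sub_le_iff_le_add]
  constructor
  · exact ciSup_le fun i => by linarith [le_ciSup hg i, (abs_sub_le_iff.1 (h i)).1]
  · exact ciSup_le fun i => by linarith [le_ciSup hf i, (abs_sub_le_iff.1 (h i)).2]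

section CTransform

variable {X P : Type*} {c : X → P → ℝ} {Mc M : ℝ} {ψ : P → ℝ}

lemma ctransX_eq_ctransP_flip (c : X → P → ℝ) : ctransX c = ctransP (flip c) := rfl

lemma bddAbove_range_cost_sub (hc : ∀ x p, |c x p| ≤ Mc) (hψ : ∀ p, |ψ p| ≤ M) (x : X) :
    BddAbove (range fun p => c x p - ψ p) := by
  refine ⟨Mc + M, ?_⟩
  rintro _ ⟨p, rfl⟩
  linarith [(abs_le.1 (hc x p)).2, (abs_le.1 (hψ p)).1]

lemma cost_sub_le_ctransP (hc : ∀ x p, |c x p| ≤ Mc) (hψ : ∀ p, |ψ p| ≤ M) (x : X) (p : P) :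
    c x p - ψ p ≤ ctransP c ψ x :=
  le_ciSup (bddAbove_range_cost_sub hc hψ x) p

lemma ctransX_ctransP_le [Nonempty X] (hc : ∀ x p, |c x p| ≤ Mc) (hψ : ∀ p, |ψ p| ≤ M)
    (p : P) :
    ctransX c (ctransP c ψ) p ≤ ψ p :=
  ciSup_le fun x => by linarith [cost_sub_le_ctransP hc hψ x p]

variable [Nonempty P]

lemma abs_ctransP_le (hc : ∀ x p, |c x p| ≤ Mc) (hψ : ∀ p, |ψ p| ≤ M) (x : X) :
    |ctransP c ψ x| ≤ Mc + M := by
  obtain ⟨p⟩ := ‹Nonempty P›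
  rw [abs_le]
  refine ⟨?_, ciSup_le fun p => ?_⟩
  · linarith [cost_sub_le_ctransP hc hψ x p, (abs_le.1 (hc x p)).1, (abs_le.1 (hψ p)).2]
  · linarith [(abs_le.1 (hc x p)).2, (abs_le.1 (hψ p)).1]

lemma abs_ctransP_sub_ctransP_le (hc : ∀ x p, |c x p| ≤ Mc) {ψ' : P → ℝ} {M' ε : ℝ}
    (hψ : ∀ p, |ψ p| ≤ M) (hψ' : ∀ p, |ψ' p| ≤ M') (h : ∀ p, |ψ p - ψ' p| ≤ ε) (x : X) :
    |ctransP c ψ x - ctransP c ψ' x| ≤ ε :=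
  abs_ciSup_sub_ciSup_le (bddAbove_range_cost_sub hc hψ x) (bddAbove_range_cost_sub hc hψ' x)
    fun p => by rw [sub_sub_sub_cancel_left, abs_sub_comm]; exact h p

lemma abs_ctransP_sub_ctransP_le_of_cost (hc : ∀ x p, |c x p| ≤ Mc) (hψ : ∀ p, |ψ p| ≤ M)
    {x x' : X} {ε : ℝ} (h : ∀ p, |c x p - c x' p| ≤ ε) :
    |ctransP c ψ x - ctransP c ψ x'| ≤ ε :=
  abs_ciSup_sub_ciSup_le (bddAbove_range_cost_sub hc hψ x) (bddAbove_range_cost_sub hc hψ x')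
    fun p => by rw [sub_sub_sub_cancel_right]; exact h p

lemma ctransP_anti (hc : ∀ x p, |c x p| ≤ Mc) {ψ' : P → ℝ} (hψ : ∀ p, |ψ p| ≤ M)
    (h : ∀ p, ψ p ≤ ψ' p) (x : X) : ctransP c ψ' x ≤ ctransP c ψ x :=
  ciSup_le fun p => (sub_le_sub_left (h p) _).trans (cost_sub_le_ctransP hc hψ x p)

lemma ctransP_add_const (hc : ∀ x p, |c x p| ≤ Mc) (hψ : ∀ p, |ψ p| ≤ M) (t : ℝ) :
    ctransP c (fun p => ψ p + t) = fun x => ctransP c ψ x - t := by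
  funext x
  have := (OrderIso.addRight (-t)).map_ciSup (bddAbove_range_cost_sub hc hψ x)
  simp only [OrderIso.addRight_apply] at this
  rw [sub_eq_add_neg, ctransP, ctransP, this]
  congr 1 with p
  ring

lemma sub_const_mem_Pc (hc : ∀ x p, |c x p| ≤ Mc) {φ : X → ℝ} (hφ : φ ∈ Pc c) (t : ℝ) :
    (fun x => φ x - t) ∈ Pc c := by
  obtain ⟨ψ, ⟨M, hψ⟩, rfl⟩ := hφ
  exact ⟨fun p => ψ p + t, ⟨M + |t|, fun p => (abs_add_le _ _).trans (by linarith [hψ p])⟩,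
    (ctransP_add_const hc hψ t).symm⟩

lemma abs_sub_le_of_mem_Pc (hc : ∀ x p, |c x p| ≤ Mc) {φ : X → ℝ} (hφ : φ ∈ Pc c)
    (x x' : X) : |φ x - φ x'| ≤ 2 * Mc := by
  obtain ⟨ψ, ⟨M, hψ⟩, rfl⟩ := hφ
  refine abs_ctransP_sub_ctransP_le_of_cost hc hψ fun p => ?_
  linarith [abs_sub (c x p) (c x' p), hc x p, hc x' p]

variable [Nonempty X]

lemma ctransP_ctransX_ctransP (hc : ∀ x p, |c x p| ≤ Mc) (hψ : ∀ p, |ψ p| ≤ M) :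
    ctransP c (ctransX c (ctransP c ψ)) = ctransP c ψ := by
  have hc' : ∀ p x, |flip c p x| ≤ Mc := fun p x => hc x p
  have hφ := abs_ctransP_le hc hψ
  funext x
  refine le_antisymm (ctransX_ctransP_le hc' hφ x) ?_
  exact ctransP_anti hc (abs_ctransP_le hc' hφ) (ctransX_ctransP_le hc hψ) x

lemma mem_Pc_iff (hc : ∀ x p, |c x p| ≤ Mc) {φ : X → ℝ} :
    φ ∈ Pc c ↔ (∃ M, ∀ x, |φ x| ≤ M) ∧ ctransP c (ctransX c φ) = φ := by
  constructor
  · rintro ⟨ψ, ⟨M, hψ⟩, rfl⟩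
    exact ⟨⟨Mc + M, abs_ctransP_le hc hψ⟩, ctransP_ctransX_ctransP hc hψ⟩
  · rintro ⟨⟨M, hφ⟩, hφφ⟩
    exact ⟨ctransX c φ, ⟨Mc + M, abs_ctransP_le (fun p x => hc x p) hφ⟩, hφφ.symm⟩

lemma abs_ctransP_ctransX_sub_le (hc : ∀ x p, |c x p| ≤ Mc) {φ φ' : X → ℝ} {M' ε : ℝ}
    (hφ : ∀ x, |φ x| ≤ M) (hφ' : ∀ x, |φ' x| ≤ M') (h : ∀ x, |φ x - φ' x| ≤ ε) (x : X) :
    |ctransP c (ctransX c φ) x - ctransP c (ctransX c φ') x| ≤ ε := by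
  have hc' : ∀ p x, |flip c p x| ≤ Mc := fun p x => hc x p
  exact abs_ctransP_sub_ctransP_le hc (abs_ctransP_le hc' hφ) (abs_ctransP_le hc' hφ')
    (abs_ctransP_sub_ctransP_le hc' hφ hφ' h) x

end CTransform

lemma equicontinuous_flip_of_continuous {X P α : Type*} [UniformSpace X]
    [WeaklyLocallyCompactSpace X] [UniformSpace P] [CompactSpace P] [UniformSpace α]
    {f : X → P → α} (hf : Continuous (uncurry f)) : Equicontinuous (flip f) :=
  fun x => (uniformity α).basis_sets.equicontinuousAt_iff_right.2 (hf.tendstoUniformly f x)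

section Regularity

variable {X P : Type*} [TopologicalSpace X] {c : X → P → ℝ} {Mc : ℝ}

lemma equicontinuous_Pc [Nonempty P] (hc : ∀ x p, |c x p| ≤ Mc)
    (hequiX : Equicontinuous (flip c)) : (Pc c).Equicontinuous := by
  intro x
  refine Metric.equicontinuousAt_iff_right.2 fun ε hε => ?_
  filter_upwards [Metric.equicontinuousAt_iff_right.1 (hequiX x) (ε / 2) (half_pos hε)]
    with x' hx'
  rintro ⟨_, ψ, ⟨M, hψ⟩, rfl⟩
  rw [Real.dist_eq]
  refine (abs_ctransP_sub_ctransP_le_of_cost hc hψ fun p => ?_).trans_lt (half_lt_self hε)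
  exact (Real.dist_eq _ _ ▸ hx' p).le

lemma isClosed_setOf_coe_mem_Pc [Nonempty X] [Nonempty P] (hc : ∀ x p, |c x p| ≤ Mc) :
    IsClosed {f : X →ᵇ ℝ | ⇑f ∈ Pc c} := by
  have hbdd (f : X →ᵇ ℝ) (x : X) : |f x| ≤ ‖f‖ := f.norm_coe_le_norm x
  have hPc : {f : X →ᵇ ℝ | ⇑f ∈ Pc c} = {f : X →ᵇ ℝ | ctransP c (ctransX c f) = f} := by
    ext f
    exact (mem_Pc_iff hc).trans (and_iff_right ⟨‖f‖, hbdd f⟩)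
  rw [hPc]
  refine isClosed_eq (continuous_pi fun x => ?_) BoundedContinuousFunction.continuous_coe
  refine (LipschitzWith.of_dist_le_mul fun f g => ?_ : LipschitzWith 1 _).continuous
  rw [NNReal.coe_one, one_mul, Real.dist_eq]
  exact abs_ctransP_ctransX_sub_le hc (hbdd f) (hbdd g)
    (fun x => by simpa only [Real.dist_eq] using f.dist_coe_le_dist x) x

def normalizedPc (c : X → P → ℝ) (x₀ : X) : Set (X →ᵇ ℝ) :=
  {f | ⇑f ∈ Pc c ∧ f x₀ = 0}

lemma isCompact_normalizedPc [CompactSpace X] [Nonempty X] [Nonempty P]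
    (hc : ∀ x p, |c x p| ≤ Mc) (hequiX : Equicontinuous (flip c)) (x₀ : X) :
    IsCompact (normalizedPc c x₀) := by
  refine BoundedContinuousFunction.arzela_ascoli₂ (Icc (-(2 * Mc)) (2 * Mc)) isCompact_Icc _
    ((isClosed_setOf_coe_mem_Pc hc).inter (isClosed_eq (continuous_eval_const x₀)
      continuous_const)) (fun f x hf => abs_le.1 ?_)
    ((equicontinuous_Pc hc hequiX).comp fun f : normalizedPc c x₀ => ⟨f, f.2.1⟩)
  simpa [hf.2] using abs_sub_le_of_mem_Pc hc hf.1 x x₀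

end Regularity

lemma continuous_ctransX {X P : Type*} [Nonempty X] [TopologicalSpace P] {c : X → P → ℝ}
    {Mc M : ℝ} (hc : ∀ x p, |c x p| ≤ Mc) (hequiP : Equicontinuous c) {φ : X → ℝ}
    (hφ : ∀ x, |φ x| ≤ M) : Continuous (ctransX c φ) :=
  (equicontinuous_Pc (c := flip c) (fun p x => hc x p) hequiP).continuous ⟨_, φ, ⟨M, hφ⟩, rfl⟩

lemma Continuous.integrable_of_compactSpace {α : Type*} [TopologicalSpace α] [CompactSpace α]
    [MeasurableSpace α] [OpensMeasurableSpace α] {μ : Measure α} [IsFiniteMeasure μ]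
    {f : α → ℝ} (hf : Continuous f) : Integrable f μ :=
  hf.integrable_of_hasCompactSupport (HasCompactSupport.of_compactSpace f)

lemma abs_integral_sub_integral_le {α : Type*} [MeasurableSpace α] {μ : Measure α}
    [IsProbabilityMeasure μ] {f g : α → ℝ} {ε : ℝ} (hf : Integrable f μ) (hg : Integrable g μ)
    (h : ∀ x, |f x - g x| ≤ ε) : |(∫ x, f x ∂μ) - ∫ x, g x ∂μ| ≤ ε := by
  rw [← integral_sub hf hg]
  simpa using norm_integral_le_of_norm_le_const (μ := μ)
    (ae_of_all _ fun x => (Real.norm_eq_abs _).trans_le (h x))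

section Kantorovich

variable {X P : Type*} [TopologicalSpace X] [CompactSpace X] [Nonempty X]
  [MeasurableSpace X] [OpensMeasurableSpace X] [TopologicalSpace P] [CompactSpace P]
  [MeasurableSpace P] [OpensMeasurableSpace P] {c : X → P → ℝ} {Mc : ℝ}
  (μ : Measure X) [IsProbabilityMeasure μ] (ν : Measure P) [IsProbabilityMeasure ν]

lemma kantF_lipschitzWith (hc : ∀ x p, |c x p| ≤ Mc) (hequiP : Equicontinuous c) :
    LipschitzWith 2 fun f : X →ᵇ ℝ => kantF c μ ν f := by
  refine LipschitzWith.of_dist_le_mul fun f g => ?_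
  have hbdd (f : X →ᵇ ℝ) (x : X) : |f x| ≤ ‖f‖ := f.norm_coe_le_norm x
  have hfg (x : X) : |f x - g x| ≤ dist f g := by
    simpa only [Real.dist_eq] using f.dist_coe_le_dist x
  have hfg' := abs_ctransP_sub_ctransP_le (c := flip c) (fun p x => hc x p) (hbdd f) (hbdd g) hfg
  rw [Real.dist_eq, kantF, kantF, add_sub_add_comm, NNReal.coe_ofNat, two_mul]
  refine (abs_add_le _ _).trans (add_le_add ?_ ?_)
  · exact abs_integral_sub_integral_le (f.continuous.integrable_of_compactSpace)
      (g.continuous.integrable_of_compactSpace) hfg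
  · exact abs_integral_sub_integral_le
      (continuous_ctransX hc hequiP (hbdd f)).integrable_of_compactSpace
      (continuous_ctransX hc hequiP (hbdd g)).integrable_of_compactSpace hfg'

lemma kantF_sub_const [Nonempty P] (hc : ∀ x p, |c x p| ≤ Mc) (hequiP : Equicontinuous c)
    (hequiX : Equicontinuous (flip c)) {φ : X → ℝ} (hφ : φ ∈ Pc c) (t : ℝ) :
    kantF c μ ν (fun x => φ x - t) = kantF c μ ν φ := by
  have hφ_cont : Continuous φ := (equicontinuous_Pc hc hequiX).continuous ⟨φ, hφ⟩
  obtain ⟨ψ, ⟨M, hψ⟩, rfl⟩ := hφ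
  have hφ_bdd := abs_ctransP_le hc hψ
  have hshift :
      ctransX c (fun x => ctransP c ψ x - t) = fun p => ctransX c (ctransP c ψ) p + t := by
    simpa [sub_eq_add_neg, ctransX_eq_ctransP_flip] using
      ctransP_add_const (c := flip c) (fun p x => hc x p) hφ_bdd (-t)
  rw [kantF, kantF, hshift, integral_sub hφ_cont.integrable_of_compactSpace (integrable_const t),
    integral_add (continuous_ctransX hc hequiP hφ_bdd).integrable_of_compactSpace
      (integrable_const t)]
  simp only [integral_const, probReal_univ, one_smul]
  ring

lemma exists_mem_normalizedPc_kantF_eq [Nonempty P] (hc : ∀ x p, |c x p| ≤ Mc)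
    (hequiP : Equicontinuous c) (hequiX : Equicontinuous (flip c)) (x₀ : X) {φ : X → ℝ}
    (hφ : φ ∈ Pc c) :
    ∃ f ∈ normalizedPc c x₀, kantF c μ ν f = kantF c μ ν φ := by
  have hφ_cont : Continuous φ := (equicontinuous_Pc hc hequiX).continuous ⟨φ, hφ⟩
  exact ⟨mkOfCompact ⟨fun x => φ x - φ x₀, hφ_cont.sub continuous_const⟩,
    ⟨sub_const_mem_Pc hc hφ _, sub_self _⟩, kantF_sub_const μ ν hc hequiP hequiX hφ _⟩

end Kantorovich

/-- For compact metric spaces `X`, `P`, a continuous cost `c : X × P → ℝ` and Borel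
probability measures `μ`, `ν`, the Kontorovich functional attains its minimum on `𝒫_c`. -/
theorem kantorovich_minimizer_exists
    {X P : Type*}
    [MetricSpace X] [CompactSpace X] [Nonempty X]
    [MeasurableSpace X] [BorelSpace X]
    [MetricSpace P] [CompactSpace P] [Nonempty P]
    [MeasurableSpace P] [BorelSpace P]
    (c : X → P → ℝ) (hc : Continuous fun q : X × P => c q.1 q.2)
    (μ : Measure X) [IsProbabilityMeasure μ]
    (ν : Measure P) [IsProbabilityMeasure ν] :
    ∃ φ₀ ∈ Pc c, ∀ φ ∈ Pc c, kantF c μ ν φ₀ ≤ kantF c μ ν φ := by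
  obtain ⟨Mc, hMc⟩ : ∃ Mc, ∀ x p, |c x p| ≤ Mc :=
    ⟨‖mkOfCompact ⟨_, hc⟩‖, fun x p => (mkOfCompact ⟨_, hc⟩).norm_coe_le_norm (x, p)⟩
  have hequiP : Equicontinuous c :=
    equicontinuous_flip_of_continuous (f := flip c) (hc.comp continuous_swap)
  have hequiX : Equicontinuous (flip c) := equicontinuous_flip_of_continuous hc
  obtain ⟨x₀⟩ := ‹Nonempty X›
  have hne : (normalizedPc c x₀).Nonempty :=
    let ⟨f, hf, _⟩ := exists_mem_normalizedPc_kantF_eq μ ν hMc hequiP hequiX x₀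
      (⟨0, ⟨0, by simp⟩, rfl⟩ : ctransP c 0 ∈ Pc c)
    ⟨f, hf⟩
  obtain ⟨f₀, hf₀, hmin⟩ := (isCompact_normalizedPc hMc hequiX x₀).exists_isMinOn hne
    (kantF_lipschitzWith μ ν hMc hequiP).continuous.continuousOn
  refine ⟨f₀, hf₀.1, fun φ hφ => ?_⟩
  obtain ⟨f, hf, hfφ⟩ := exists_mem_normalizedPc_kantF_eq μ ν hMc hequiP hequiX x₀ hφ
  exact (hmin hf).trans_eq hfφ
end

section
/- Let (Ω, ν) be a measure space, m ≥ 1, and let f_1, …, f_N ∈ L²(Ω, ν) and β_1, …, β_N ∈ ℤ^m be such that for every β ∈ ℤ^m, the subfamily {f_i : β_i = β} is linearly independent in L²(Ω, ν). Then there exists a constant C > 0 such that for all coefficients a_1, …, a_N ∈ ℂ and all r ∈ (0,∞)^m, one has ∫_Ω ∫_{T^m} |∑_{i=1}^N a_i f_i(w) r^{β_i} e^{√−1 ⟨β_i, θ⟩}|² dθ dν(w) ≥ C ∑_{i=1}^N |a_i|² r^{2β_i}. In particular, the constant C is independent of a and of r. -/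
/-!
Averaging over the torus kills the cross terms between distinct frequencies, so with
`d i = a i r^{β i}` the left side equals `(2π)^m ∑_b ∫ |∑_{β i = b} d i f i|² dν`, while the
right side is `C ∑ |d i|²`. Each fiber `{f i | β i = b}` is linearly independent in `L²`, so the
`L²` norm of its combinations dominates a fixed multiple of the Euclidean norm of the coefficients
(all norms on a finite-dimensional space are equivalent); the smallest of these finitely many
constants works for all fibers at once.
-/

open MeasureTheory Complex Finset

noncomputable def torusChar {m : ℕ} (b : Fin m → ℤ) (θ : Fin m → ℝ) : ℂ :=
  exp (I * ↑(∑ k, (b k : ℝ) * θ k))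

lemma setIntegral_exp_I_intCast_mul_Icc (n : ℤ) :
    ∫ t in Set.Icc 0 (2 * Real.pi), exp (I * n * t) = if n = 0 then ↑(2 * Real.pi) else 0 := by
  rw [integral_Icc_eq_integral_Ioc, ← intervalIntegral.integral_of_le (by positivity)]
  split_ifs with hn
  · simp [hn]
  · have hIn : I * n ≠ 0 := mul_ne_zero I_ne_zero (Int.cast_ne_zero.2 hn)
    rw [integral_exp_mul_complex hIn, ofReal_zero, mul_zero, exp_zero,
      show I * n * ↑(2 * Real.pi) = n * (2 * Real.pi * I) by push_cast; ring,
      exp_int_mul_two_pi_mul_I, sub_self, zero_div]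

lemma torusChar_eq_prod {m : ℕ} (b : Fin m → ℤ) (θ : Fin m → ℝ) :
    torusChar b θ = ∏ k, exp (I * b k * θ k) := by
  rw [torusChar, ← exp_sum, ofReal_sum, mul_sum]
  push_cast
  simp only [mul_assoc]

lemma setIntegral_torusChar {m : ℕ} (b : Fin m → ℤ) :
    ∫ θ in Set.Icc 0 (fun _ => 2 * Real.pi), torusChar b θ =
      if b = 0 then ↑((2 * Real.pi) ^ m) else 0 := by
  rw [← Set.pi_univ_Icc, volume_pi, Measure.restrict_pi_pi]
  simp_rw [torusChar_eq_prod]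
  rw [integral_fintype_prod_eq_prod (fun k (t : ℝ) => exp (I * b k * t))]
  simp_rw [Pi.zero_apply, setIntegral_exp_I_intCast_mul_Icc]
  split_ifs with hb
  · simp [hb]
  · obtain ⟨k, hk⟩ := Function.ne_iff.1 hb
    exact prod_eq_zero (mem_univ k) (if_neg hk)

lemma torusChar_mul_conj {m : ℕ} (b b' : Fin m → ℤ) (θ : Fin m → ℝ) :
    torusChar b θ * (starRingEnd ℂ) (torusChar b' θ) = torusChar (b - b') θ := by
  rw [torusChar, torusChar, torusChar, ← exp_conj, ← exp_add]
  congr 1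
  simp only [map_mul, conj_I, conj_ofReal, Pi.sub_apply, Int.cast_sub, sub_mul, sum_sub_distrib]
  push_cast
  ring

lemma continuous_torusChar {m : ℕ} (b : Fin m → ℤ) : Continuous (torusChar b) := by
  unfold torusChar; fun_prop

lemma setIntegral_norm_sum_torusChar_sq {m : ℕ} (B : Finset (Fin m → ℤ))
    (C : (Fin m → ℤ) → ℂ) :
    ∫ θ in Set.Icc 0 (fun _ => 2 * Real.pi), ‖∑ b ∈ B, C b * torusChar b θ‖ ^ 2 =
      (2 * Real.pi) ^ m * ∑ b ∈ B, ‖C b‖ ^ 2 := by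
  have hint : ∀ b b', IntegrableOn (fun θ => C b * (starRingEnd ℂ) (C b') * torusChar (b - b') θ)
      (Set.Icc 0 (fun _ => 2 * Real.pi)) := fun b b' =>
    (continuous_const.mul (continuous_torusChar _)).integrableOn_Icc
  apply ofReal_injective
  rw [← integral_complex_ofReal]
  calc ∫ θ in Set.Icc 0 (fun _ => 2 * Real.pi), ((‖∑ b ∈ B, C b * torusChar b θ‖ ^ 2 : ℝ) : ℂ)
      = ∫ θ in Set.Icc 0 (fun _ => 2 * Real.pi),
          ∑ b ∈ B, ∑ b' ∈ B, C b * (starRingEnd ℂ) (C b') * torusChar (b - b') θ := by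
        congr 1; ext θ
        rw [ofReal_pow, ← mul_conj', map_sum, sum_mul_sum]
        refine sum_congr rfl fun b _ => sum_congr rfl fun b' _ => ?_
        rw [map_mul, ← torusChar_mul_conj]; ring
    _ = ∑ b ∈ B, ∑ b' ∈ B, C b * (starRingEnd ℂ) (C b') *
          if b - b' = 0 then (((2 * Real.pi) ^ m : ℝ) : ℂ) else 0 := by
        rw [integral_finsetSum _ fun b _ => integrable_finsetSum _ fun b' _ => hint b b']
        refine sum_congr rfl fun b _ => ?_
        rw [integral_finsetSum _ fun b' _ => hint b b']
        simp_rw [integral_const_mul, setIntegral_torusChar]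
    _ = ∑ b ∈ B, C b * (starRingEnd ℂ) (C b) * (((2 * Real.pi) ^ m : ℝ) : ℂ) := by
        refine sum_congr rfl fun b hb => ?_
        simp only [sub_eq_zero, mul_ite, mul_zero, sum_ite_eq, if_pos hb]
    _ = ↑((2 * Real.pi) ^ m * ∑ b ∈ B, ‖C b‖ ^ 2) := by
        simp only [mul_conj', ofReal_mul, ofReal_sum, ofReal_pow, mul_sum, mul_comm]

lemma setIntegral_norm_sum_mul_torusChar_sq {ι : Type*} [Fintype ι] {m : ℕ}
    (β : ι → Fin m → ℤ) (c : ι → ℂ) :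
    ∫ θ in Set.Icc 0 (fun _ => 2 * Real.pi), ‖∑ i, c i * torusChar (β i) θ‖ ^ 2 =
      (2 * Real.pi) ^ m * ∑ b ∈ univ.image β, ‖∑ i with β i = b, c i‖ ^ 2 := by
  rw [← setIntegral_norm_sum_torusChar_sq]
  congr with θ
  rw [← sum_fiberwise_of_maps_to (fun i _ => mem_image_of_mem β (mem_univ i))
    (fun i => c i * torusChar (β i) θ)]
  congr 2
  refine sum_congr rfl fun b _ => ?_
  rw [sum_mul]
  exact sum_congr rfl fun i hi => by rw [(mem_filter.1 hi).2]

lemma LinearIndepOn.exists_pos_mul_sum_norm_sq_le {𝕜 E ι : Type*} [RCLike 𝕜]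
    [NormedAddCommGroup E] [NormedSpace 𝕜 E] {v : ι → E} {s : Finset ι}
    (hv : LinearIndepOn 𝕜 v s) :
    ∃ c > 0, ∀ d : ι → 𝕜, c * ∑ i ∈ s, ‖d i‖ ^ 2 ≤ ‖∑ i ∈ s, d i • v i‖ ^ 2 := by
  let L : EuclideanSpace 𝕜 s →ₗ[𝕜] E :=
    Fintype.linearCombination 𝕜 (fun i : s => v i) ∘ₗ (WithLp.linearEquiv 2 𝕜 (s → 𝕜)).toLinearMap
  have hL : LinearMap.ker L = ⊥ :=
    LinearMap.ker_eq_bot'.2 fun x hx => WithLp.ofLp_injective 2 <| funext <|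
      Fintype.linearIndependent_iff.1 hv x.ofLp
        (by simpa [L, Fintype.linearCombination_apply] using hx)
  obtain ⟨K, hK, hKL⟩ := L.exists_antilipschitzWith hL
  refine ⟨((K : ℝ) ^ 2)⁻¹, by positivity, fun d => ?_⟩
  let x : EuclideanSpace 𝕜 s := WithLp.toLp 2 fun i => d i
  have hx : ‖x‖ ≤ K * ‖L x‖ := ZeroHomClass.bound_of_antilipschitz L hKL x
  calc ((K : ℝ) ^ 2)⁻¹ * ∑ i ∈ s, ‖d i‖ ^ 2 = ((K : ℝ) ^ 2)⁻¹ * ‖x‖ ^ 2 := by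
        rw [EuclideanSpace.norm_sq_eq, ← s.sum_coe_sort]
    _ ≤ ((K : ℝ) ^ 2)⁻¹ * (K * ‖L x‖) ^ 2 := by gcongr
    _ = ‖∑ i ∈ s, d i • v i‖ ^ 2 := by
        rw [mul_pow, inv_mul_cancel_left₀ (by positivity), ← s.sum_coe_sort]; rfl

lemma Finset.exists_pos_forall_le {ι : Type*} (s : Finset ι) {c : ι → ℝ}
    (hc : ∀ i ∈ s, 0 < c i) : ∃ C > 0, ∀ i ∈ s, C ≤ c i :=
  (((Filter.eventually_all_finset s).2 fun i hi =>
    (eventually_le_nhds (hc i hi)).filter_mono nhdsWithin_le_nhds).and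
      (self_mem_nhdsWithin (s := Set.Ioi (0 : ℝ)))).exists.imp fun _ h => ⟨h.2, h.1⟩

namespace MeasureTheory

variable {Ω E 𝕜 ι : Type*} [MeasurableSpace Ω] {ν : Measure Ω} [NormedAddCommGroup E]

lemma Lp.norm_sq_eq_integral_norm_sq (F : Lp E 2 ν) : ‖F‖ ^ 2 = ∫ w, ‖F w‖ ^ 2 ∂ν := by
  rw [Lp.norm_def, (Lp.memLp F).eLpNorm_eq_integral_rpow_norm two_ne_zero ENNReal.ofNat_ne_top,
    ENNReal.toReal_ofReal (by positivity)]
  simp only [ENNReal.toReal_ofNat, Real.rpow_two]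
  exact Real.rpow_inv_natCast_pow (integral_nonneg fun w => by positivity) two_ne_zero

variable [RCLike 𝕜] [NormedSpace 𝕜 E] {f : ι → Ω → E}

lemma coeFn_sum_smul_toLp (hf : ∀ i, MemLp (f i) 2 ν) (s : Finset ι) (d : ι → 𝕜) :
    ⇑(∑ i ∈ s, d i • (hf i).toLp (f i)) =ᵐ[ν] fun w => ∑ i ∈ s, d i • f i w := by
  have hsmul : ∀ᵐ w ∂ν, ∀ i ∈ s, (d i • (hf i).toLp (f i)) w = d i • f i w :=
    (Filter.eventually_all_finset s).2 fun i _ => by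
      filter_upwards [Lp.coeFn_smul (d i) ((hf i).toLp (f i)), (hf i).coeFn_toLp] with w h1 h2
      rw [h1, Pi.smul_apply, h2]
  filter_upwards [Lp.coeFn_fun_finsetSum s fun i => d i • (hf i).toLp (f i), hsmul] with w h1 h2
  rw [h1]
  exact sum_congr rfl h2

lemma exists_pos_mul_sum_norm_sq_le_integral (hf : ∀ i, MemLp (f i) 2 ν) {s : Finset ι}
    (hs : ∀ d : ι → 𝕜, (∀ᵐ w ∂ν, ∑ i ∈ s, d i • f i w = 0) → ∀ i ∈ s, d i = 0) :
    ∃ c > 0, ∀ d : ι → 𝕜, c * ∑ i ∈ s, ‖d i‖ ^ 2 ≤ ∫ w, ‖∑ i ∈ s, d i • f i w‖ ^ 2 ∂ν := by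
  have hv : LinearIndepOn 𝕜 (fun i => (hf i).toLp (f i)) s :=
    linearIndepOn_finset_iff.2 fun d hd => hs d <| by
      filter_upwards [coeFn_sum_smul_toLp hf s d, Lp.coeFn_zero E 2 ν] with w hsum hzero
      rw [← hsum, hd, hzero, Pi.zero_apply]
  obtain ⟨c, hc, hcv⟩ := hv.exists_pos_mul_sum_norm_sq_le
  refine ⟨c, hc, fun d => (hcv d).trans_eq ?_⟩
  rw [Lp.norm_sq_eq_integral_norm_sq]
  exact integral_congr_ae ((coeFn_sum_smul_toLp hf s d).fun_comp fun x => ‖x‖ ^ 2)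

lemma exists_pos_mul_sum_norm_sq_le_integral_sum_fiberwise {κ : Type*} [DecidableEq κ]
    [Fintype ι] (hf : ∀ i, MemLp (f i) 2 ν) (β : ι → κ)
    (hβ : ∀ b, ∀ a : ι → 𝕜, (∀ i, β i ≠ b → a i = 0) →
      (∀ᵐ w ∂ν, ∑ i, a i • f i w = 0) → ∀ i, a i = 0) :
    ∃ C > 0, ∀ d : ι → 𝕜, C * ∑ i, ‖d i‖ ^ 2 ≤
      ∫ w, ∑ b ∈ univ.image β, ‖∑ i with β i = b, d i • f i w‖ ^ 2 ∂ν := by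
  have hgram : ∀ b, ∃ c > 0, ∀ d : ι → 𝕜,
      c * ∑ i with β i = b, ‖d i‖ ^ 2 ≤ ∫ w, ‖∑ i with β i = b, d i • f i w‖ ^ 2 ∂ν :=
    fun b => exists_pos_mul_sum_norm_sq_le_integral hf fun d hd i hi => by
      have := hβ b (fun j => if β j = b then d j else 0) (fun j hj => if_neg hj)
        (by simpa [sum_filter] using hd) i
      simpa [(mem_filter.1 hi).2] using this
  choose c hc0 hc using hgram
  obtain ⟨C, hC0, hCc⟩ := (univ.image β).exists_pos_forall_le fun b _ => hc0 b
  refine ⟨C, hC0, fun d => ?_⟩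
  have hfiber : ∀ b, Integrable (fun w => ‖∑ i with β i = b, d i • f i w‖ ^ 2) ν := fun b =>
    (memLp_finsetSum _ fun i _ => (hf i).const_smul (d i)).integrable_norm_pow two_ne_zero
  rw [integral_finsetSum _ fun b _ => hfiber b,
    ← sum_fiberwise_of_maps_to fun i _ => mem_image_of_mem β (mem_univ i), mul_sum]
  gcongr with b hb
  exact (mul_le_mul_of_nonneg_right (hCc b hb) (by positivity)).trans (hc b d)

end MeasureTheory

lemma norm_mul_ofReal_prod_zpow_sq {m : ℕ} (a : ℂ) (r : Fin m → ℝ) (b : Fin m → ℤ) :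
    ‖a * ↑(∏ k, r k ^ b k)‖ ^ 2 = ‖a‖ ^ 2 * ∏ k, r k ^ (2 * b k) := by
  simp only [norm_mul, mul_pow, norm_real, Real.norm_eq_abs, sq_abs, ← prod_pow, zpow_mul']
  norm_cast

theorem l2_almost_orthogonality_general
    {Ω : Type*} [MeasurableSpace Ω] (ν : Measure Ω)
    {m N : ℕ}
    (f : Fin N → Ω → ℂ) (hf : ∀ i, MemLp (f i) 2 ν)
    (β : Fin N → Fin m → ℤ)
    (hindep : ∀ b : Fin m → ℤ, ∀ a : Fin N → ℂ,
      (∀ i, β i ≠ b → a i = 0) →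
      (∀ᵐ w ∂ν, ∑ i, a i * f i w = 0) →
      ∀ i, a i = 0) :
    ∃ C > (0 : ℝ), ∀ (a : Fin N → ℂ) (r : Fin m → ℝ), (∀ k, 0 < r k) →
      C * ∑ i, ‖a i‖ ^ 2 * ∏ k, r k ^ (2 * β i k) ≤
        ∫ w, (∫ θ in Set.Icc (0 : Fin m → ℝ) (fun _ => 2 * Real.pi),
          ‖∑ i, a i * f i w * (↑(∏ k, r k ^ β i k) : ℂ) *
            Complex.exp (Complex.I * (↑(∑ k, (β i k : ℝ) * θ k) : ℂ))‖ ^ 2) ∂ν := by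
  obtain ⟨C, hC0, hC⟩ := exists_pos_mul_sum_norm_sq_le_integral_sum_fiberwise hf β hindep
  refine ⟨(2 * Real.pi) ^ m * C, by positivity, fun a r _ => ?_⟩
  let d : Fin N → ℂ := fun i => a i * ↑(∏ k, r k ^ β i k)
  calc (2 * Real.pi) ^ m * C * ∑ i, ‖a i‖ ^ 2 * ∏ k, r k ^ (2 * β i k)
      = (2 * Real.pi) ^ m * (C * ∑ i, ‖d i‖ ^ 2) := by
        simp only [d, norm_mul_ofReal_prod_zpow_sq, mul_assoc]
    _ ≤ (2 * Real.pi) ^ m *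
          ∫ w, ∑ b ∈ univ.image β, ‖∑ i with β i = b, d i • f i w‖ ^ 2 ∂ν := by
        gcongr
        exact hC d
    _ = _ := by
        rw [← integral_const_mul]
        congr with w
        rw [← setIntegral_norm_sum_mul_torusChar_sq]
        congr with θ
        congr 2
        exact sum_congr rfl fun i _ => by simp only [d, smul_eq_mul, torusChar]; ring

/-- `L²`-almost orthogonality: let `(Ω, ν)` be a measure space, `m ≥ 1`, and let
`f 1, …, f N ∈ L²(Ω, ν)` and `β 1, …, β N ∈ ℤ^m` be such that for each `β ∈ ℤ^m` the
subfamily `{f i : β i = β}` is linearly independent in `L²(Ω, ν)`.  Then there is a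
constant `C > 0`, independent of the coefficients `a` and of `r ∈ (0,∞)^m`, with
`∫_Ω ∫_{T^m} |∑ i, a i * f i w * r^{β i} * e^{√-1 ⟨β i, θ⟩}|² dθ dν(w)
  ≥ C * ∑ i, |a i|² r^{2 β i}`. -/
theorem l2_almost_orthogonality
    {Ω : Type*} [MeasurableSpace Ω] (ν : Measure Ω)
    {m N : ℕ} (hm : 1 ≤ m)
    (f : Fin N → Ω → ℂ) (hf : ∀ i, MemLp (f i) 2 ν)
    (β : Fin N → Fin m → ℤ)
    (hindep : ∀ b : Fin m → ℤ, ∀ a : Fin N → ℂ,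
      (∀ i, β i ≠ b → a i = 0) →
      (∀ᵐ w ∂ν, ∑ i, a i * f i w = 0) →
      ∀ i, a i = 0) :
    ∃ C > (0 : ℝ), ∀ (a : Fin N → ℂ) (r : Fin m → ℝ), (∀ k, 0 < r k) →
      C * ∑ i, ‖a i‖ ^ 2 * ∏ k, r k ^ (2 * β i k) ≤
        ∫ w, (∫ θ in Set.Icc (0 : Fin m → ℝ) (fun _ => 2 * Real.pi),
          ‖∑ i, a i * f i w * (↑(∏ k, r k ^ β i k) : ℂ) *
            Complex.exp (Complex.I * (↑(∑ k, (β i k : ℝ) * θ k) : ℂ))‖ ^ 2) ∂ν :=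
  l2_almost_orthogonality_general ν f hf β hindep
end
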